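/- Let SL(3,ℂ) × SL(3,ℂ) × SL(2,ℂ) act on V = ℂ³ ⊗ ℂ³ ⊗ ℂ² by the tensor product of standard representations. Identifying V with pairs (A,B) of 3×3 complex matrices (the two slices along the ℂ² factor), the polynomial given by the discriminant of the binary cubic f(x,y) = det(xA + yB) is a nonzero homogeneous invariant of degree 12 for this action. -/

import Mathlib

open Polynomial Matrix

/-- The binary cubic `f(x,y) = det(xA + yB)`, dehomogenized at `y = 1`. -/
noncomputable def detCubic (A B : Matrix (Fin 3) (Fin 3) ℂ) : Polynomial ℂ :=
  ((Polynomial.X : Polynomial ℂ) • A.map Polynomial.C + B.map Polynomial.C).det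

/-- The discriminant `b²c² - 4ac³ - 4b³d - 27a²d² + 18abcd` of a cubic polynomial
`ax³ + bx² + cx + d`. -/
noncomputable def discCubic (p : Polynomial ℂ) : ℂ :=
  p.coeff 2 ^ 2 * p.coeff 1 ^ 2 - 4 * p.coeff 3 * p.coeff 1 ^ 3 -
    4 * p.coeff 2 ^ 3 * p.coeff 0 - 27 * p.coeff 3 ^ 2 * p.coeff 0 ^ 2 +
    18 * p.coeff 3 * p.coeff 2 * p.coeff 1 * p.coeff 0

/-- The discriminant of the binary cubic `det(xA + yB)`. -/
noncomputable def discDet (A B : Matrix (Fin 3) (Fin 3) ℂ) : ℂ :=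
  discCubic (detCubic A B)

/-! The binary cubic `det (x A + y B)` has coefficients `det A`, two mixed determinants and
`det B`. Replacing `(A, B)` by `(g₁ A g₂ᵀ, g₁ B g₂ᵀ)` multiplies it by `det g₁ det g₂ = 1`, while
`h ∈ GL₂` acts on it by linear substitution, which multiplies the discriminant of a binary cubic
by `(det h)⁶`; the scalar `t` is the substitution by `t • 1`, whence the degree `12`. The pair
`(1, diag (0, 1, 2))` gives the cubic `x (x + y) (x + 2y)`, with distinct roots. -/

namespace Cubic

variable {R : Type*} [CommRing R]

/-- Reading `P` as the binary form `a x³ + b x² y + c x y² + d y³`, the form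
`P (α x + β y) (γ x + δ y)`. -/
def linearSubst (P : Cubic R) (α β γ δ : R) : Cubic R where
  a := P.a * α ^ 3 + P.b * α ^ 2 * γ + P.c * α * γ ^ 2 + P.d * γ ^ 3
  b := 3 * P.a * α ^ 2 * β + P.b * (α ^ 2 * δ + 2 * α * β * γ) +
    P.c * (2 * α * γ * δ + β * γ ^ 2) + 3 * P.d * γ ^ 2 * δ
  c := 3 * P.a * α * β ^ 2 + P.b * (β ^ 2 * γ + 2 * α * β * δ) +
    P.c * (2 * β * γ * δ + α * δ ^ 2) + 3 * P.d * γ * δ ^ 2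
  d := P.a * β ^ 3 + P.b * β ^ 2 * δ + P.c * β * δ ^ 2 + P.d * δ ^ 3

theorem discr_linearSubst (P : Cubic R) (α β γ δ : R) :
    (P.linearSubst α β γ δ).discr = (α * δ - β * γ) ^ 6 * P.discr := by
  simp only [discr, linearSubst]
  ring

end Cubic

section DetForm

variable {R S : Type*} [CommRing R] [CommRing S]

def mixedDet (A B : Matrix (Fin 3) (Fin 3) R) : R :=
  ∑ i, (A.updateRow i (B i)).det

theorem det_smul_add_smul (u v : R) (A B : Matrix (Fin 3) (Fin 3) R) :
    (u • A + v • B).det =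
      A.det * u ^ 3 + mixedDet A B * u ^ 2 * v + mixedDet B A * u * v ^ 2 + B.det * v ^ 3 := by
  simp only [mixedDet, det_fin_three, Fin.sum_univ_three, updateRow_apply, Matrix.add_apply,
    Matrix.smul_apply, smul_eq_mul, Fin.reduceEq, ↓reduceIte]
  ring

theorem mixedDet_smul_add_smul (α β γ δ : R) (A B : Matrix (Fin 3) (Fin 3) R) :
    mixedDet (α • A + γ • B) (β • A + δ • B) =
      3 * A.det * α ^ 2 * β + mixedDet A B * (α ^ 2 * δ + 2 * α * β * γ) +
        mixedDet B A * (2 * α * γ * δ + β * γ ^ 2) + 3 * B.det * γ ^ 2 * δ := by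
  simp only [mixedDet, det_fin_three, Fin.sum_univ_three, updateRow_apply, Matrix.add_apply,
    Matrix.smul_apply, smul_eq_mul, Fin.reduceEq, ↓reduceIte]
  ring

theorem RingHom.map_mixedDet (f : R →+* S) (A B : Matrix (Fin 3) (Fin 3) R) :
    f (mixedDet A B) = mixedDet (A.map f) (B.map f) := by
  simp [mixedDet, det_fin_three, Fin.sum_univ_three, updateRow_apply]

def detForm (A B : Matrix (Fin 3) (Fin 3) R) : Cubic R :=
  ⟨A.det, mixedDet A B, mixedDet B A, B.det⟩

theorem detForm_smul_add_smul (α β γ δ : R) (A B : Matrix (Fin 3) (Fin 3) R) :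
    detForm (α • A + γ • B) (β • A + δ • B) = (detForm A B).linearSubst α β γ δ := by
  ext <;> simp only [detForm, Cubic.linearSubst, det_smul_add_smul, mixedDet_smul_add_smul]
  all_goals ring

end DetForm

theorem detCubic_eq_toPoly (A B : Matrix (Fin 3) (Fin 3) ℂ) :
    detCubic A B = (detForm A B).toPoly := by
  rw [detCubic, ← one_smul ℂ[X] (B.map C), det_smul_add_smul, Cubic.toPoly, detForm,
    ← RingHom.mapMatrix_apply, ← RingHom.mapMatrix_apply, ← RingHom.map_det, ← RingHom.map_det,
    RingHom.mapMatrix_apply, RingHom.mapMatrix_apply, ← RingHom.map_mixedDet,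
    ← RingHom.map_mixedDet]
  ring

theorem discDet_eq_discr (A B : Matrix (Fin 3) (Fin 3) ℂ) :
    discDet A B = (detForm A B).discr := by
  rw [discDet, discCubic, detCubic_eq_toPoly, Cubic.coeff_eq_a, Cubic.coeff_eq_b,
    Cubic.coeff_eq_c, Cubic.coeff_eq_d, Cubic.discr]

theorem discDet_smul_add_smul (α β γ δ : ℂ) (A B : Matrix (Fin 3) (Fin 3) ℂ) :
    discDet (α • A + γ • B) (β • A + δ • B) = (α * δ - β * γ) ^ 6 * discDet A B := by
  rw [discDet_eq_discr, discDet_eq_discr, detForm_smul_add_smul, Cubic.discr_linearSubst]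

theorem detCubic_mul_mul (P Q A B : Matrix (Fin 3) (Fin 3) ℂ) :
    detCubic (P * A * Q) (P * B * Q) = C (P.det * Q.det) * detCubic A B := by
  have factor : (X : ℂ[X]) • (P * A * Q).map C + (P * B * Q).map C =
      P.map C * ((X : ℂ[X]) • A.map C + B.map C) * Q.map C := by
    simp only [Matrix.map_mul, Matrix.mul_add, Matrix.add_mul, Matrix.mul_smul, Matrix.smul_mul]
  rw [detCubic, detCubic, factor, det_mul, det_mul, ← C.mapMatrix_apply P, ← C.mapMatrix_apply Q,
    ← C.map_det, ← C.map_det, C_mul]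
  ring

theorem detForm_one_diagonal : detForm 1 (diagonal ![0, 1, 2]) = (⟨1, 3, 2, 0⟩ : Cubic ℂ) := by
  ext <;> simp [detForm, mixedDet, det_fin_three, Fin.sum_univ_three, updateRow_apply,
    Fin.prod_univ_three]
  norm_num

theorem discDet_ne_zero : discDet 1 (diagonal ![0, 1, 2]) ≠ 0 := by
  rw [discDet_eq_discr, detForm_one_diagonal, Cubic.discr]
  norm_num

/-- On `V = ℂ³ ⊗ ℂ³ ⊗ ℂ²`, identified with pairs `(A,B)` of `3×3` complex matrices,
the discriminant of the binary cubic `det(xA+yB)` is a nonzero homogeneous degree-12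
invariant for `SL(3,ℂ) × SL(3,ℂ) × SL(2,ℂ)` acting by `(g₁,g₂)·A = g₁Ag₂ᵀ` and by
linear substitution in `(x,y)`. -/
theorem stmt10 :
    (∀ (t : ℂ) (A B : Matrix (Fin 3) (Fin 3) ℂ),
      discDet (t • A) (t • B) = t ^ 12 * discDet A B) ∧
    (∀ (g₁ g₂ : Matrix.SpecialLinearGroup (Fin 3) ℂ) (A B : Matrix (Fin 3) (Fin 3) ℂ),
      discDet (g₁.1 * A * g₂.1ᵀ) (g₁.1 * B * g₂.1ᵀ) = discDet A B) ∧
    (∀ (h : Matrix.SpecialLinearGroup (Fin 2) ℂ) (A B : Matrix (Fin 3) (Fin 3) ℂ),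
      discDet (h.1 0 0 • A + h.1 1 0 • B) (h.1 0 1 • A + h.1 1 1 • B) = discDet A B) ∧
    (∃ A B : Matrix (Fin 3) (Fin 3) ℂ, discDet A B ≠ 0) := by
  refine ⟨fun t A B => ?_, fun g₁ g₂ A B => ?_, fun h A B => ?_, ⟨_, _, discDet_ne_zero⟩⟩
  · have hscalar := discDet_smul_add_smul t 0 0 t A B
    simp only [zero_smul, add_zero, zero_add, mul_zero, sub_zero] at hscalar
    rw [hscalar]
    ring
  · rw [discDet, detCubic_mul_mul, det_transpose, g₁.2, g₂.2, mul_one, C_1, one_mul, discDet]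
  · have hdet : h.1 0 0 * h.1 1 1 - h.1 0 1 * h.1 1 0 = 1 := by
      rw [← det_fin_two, h.2]
    rw [discDet_smul_add_smul, hdet, one_pow, one_mul]
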